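/- arXiv:1808.01152 — 3 statements merged into one kernel-verified Lean document; each statement's English description precedes it below -/
import Mathlib

section
/- There is an absolute constant K such that for all d and all Y ⊆ E (the even side of Q_d) and positive integers x, b with b ≤ |Y|/2, the number of sets X ⊆ E with |X| = x, with at most b 2-components, and with each 2-component of X meeting Y, is at most C(|Y|, b) · d^{Kx}. The same bound holds with E replaced by O. -/
open Finset

abbrev V (d : ℕ) : Type := Fin d → Bool

def cube (d : ℕ) : SimpleGraph (V d) where
  Adj u v := (Finset.univ.filter fun i => u i ≠ v i).card = 1
  symm := by
    constructor
    intro u v h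
    have e : (Finset.univ.filter fun i => v i ≠ u i) = (Finset.univ.filter fun i => u i ≠ v i) := by
      apply Finset.filter_congr
      intro i _
      exact ne_comm
    rw [e]
    exact h
  loopless := by
    constructor
    intro u h
    simp at h

/-- a vertex of the hypercube is even if it has an even number of `true` coordinates. -/
def isEven {d : ℕ} (v : V d) : Prop := Even (Finset.univ.filter fun i => v i = true).card

/-- The neighborhood of a set of vertices. -/
def nbhd (d : ℕ) (X : Set (V d)) : Set (V d) := {u | ∃ v ∈ X, (cube d).Adj u v}

/-- `A` is 2-linked: any two of its vertices are joined by a chain of vertices of `A` in which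
consecutive vertices are at graph distance at most 2. -/
def TwoLinked (d : ℕ) (A : Set (V d)) : Prop :=
  ∀ x ∈ A, ∀ y ∈ A,
    Relation.ReflTransGen (fun a b => a ∈ A ∧ b ∈ A ∧ (cube d).dist a b ≤ 2) x y

/-- `C` is a 2-component of `A`: a maximal 2-linked (nonempty) subset of `A`. -/
def Is2Comp (d : ℕ) (A C : Set (V d)) : Prop :=
  C ⊆ A ∧ C.Nonempty ∧ TwoLinked d C ∧
    ∀ C' : Set (V d), C ⊆ C' → C' ⊆ A → TwoLinked d C' → C' = C

/-!
Choose in every 2-component of `X` a root in `Y`. The roots form a subset of `Y` with at most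
`min b x` elements; since `2b ≤ |Y|` there are at most `(x + 1) C(|Y|, b)` such subsets. Given the
roots, `X` is determined by a word of length `2x` over `(d + 1)² + 1` letters: a depth-first walk
through a 2-component `C` from its root visits fewer than `2|C|` vertices, each step flips at most
two coordinates and is one letter, and one more letter jumps to the next root. Hence there are at
most `(x + 1) C(|Y|, b) ((d + 1)² + 1)^{2x} ≤ C(|Y|, b) d^{9x}` sets `X`, where `d ≥ 2` because a
parity class of `Q_0` or `Q_1` has a single vertex.
-/

section CoveringWalks

variable {α : Type*} {R : α → α → Prop}

def LinkedFrom (R : α → α → Prop) (S : Set α) (r : α) : Prop :=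
  ∀ v ∈ S, Relation.ReflTransGen (fun a b => a ∈ S ∧ b ∈ S ∧ R a b) r v

lemma Relation.ReflTransGen.exists_rel_mem_notMem {T : Set α} {a b : α}
    (h : Relation.ReflTransGen R a b) (ha : a ∈ T) (hb : b ∉ T) : ∃ u ∈ T, ∃ w ∉ T, R u w := by
  induction h with
  | refl => exact absurd ha hb
  | @tail b c _ hbc ih =>
    by_cases hbT : b ∈ T
    · exact ⟨b, hbT, c, hb, hbc⟩
    · exact ih hbT

lemma List.IsChain.exists_detour {l : List α} (hl : l.IsChain R) {u w : α} (hu : u ∈ l)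
    (huw : R u w) (hwu : R w u) :
    ∃ l' : List α, l'.IsChain R ∧ l'.head? = l.head? ∧ {v | v ∈ l'} = insert w {v | v ∈ l} ∧
      l'.length = l.length + 2 := by
  obtain ⟨l₁, l₂, rfl⟩ := List.append_of_mem hu
  refine ⟨l₁ ++ u :: w :: u :: l₂, ?_, ?_, ?_, ?_⟩
  · rw [List.isChain_split] at hl
    rw [List.isChain_append_cons_cons, List.isChain_cons_cons]
    exact ⟨hl.1, huw, hwu, hl.2⟩
  · cases l₁ <;> rfl
  · ext v
    simp only [List.mem_append, List.mem_cons, Set.mem_ofPred_eq, Set.mem_insert_iff]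
    tauto
  · simp only [List.length_append, List.length_cons]
    omega

theorem exists_isChain_cover (hR : ∀ ⦃a b⦄, R a b → R b a) {S : Set α} (hS : S.Finite)
    {r : α} (hr : r ∈ S) (hlink : LinkedFrom R S r) :
    ∃ l : List α, l.IsChain R ∧ l.head? = some r ∧ {v | v ∈ l} = S ∧ l.length < 2 * S.ncard := by
  suffices grow : ∀ n (l : List α), l.IsChain R → l.head? = some r → {v | v ∈ l} ⊆ S →
      l.length < 2 * {v | v ∈ l}.ncard → (S \ {v | v ∈ l}).ncard = n →
      ∃ l' : List α, l'.IsChain R ∧ l'.head? = some r ∧ {v | v ∈ l'} = S ∧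
        l'.length < 2 * S.ncard from
    grow _ [r] (List.isChain_singleton r) rfl (by simpa using hr) (by simp) rfl
  intro n
  induction n with
  | zero =>
    intro l hl hhead hsub hlen hn
    have hT : {v | v ∈ l} = S :=
      hsub.antisymm (Set.sdiff_eq_empty.mp ((Set.ncard_eq_zero (hS.sdiff)).mp hn))
    exact ⟨l, hl, hhead, hT, hT ▸ hlen⟩
  | succ n ih =>
    intro l hl hhead hsub hlen hn
    obtain ⟨v, hvS, hvl⟩ : (S \ {v | v ∈ l}).Nonempty := Set.nonempty_of_ncard_ne_zero (by omega)
    have hrl : r ∈ {v | v ∈ l} := List.mem_of_mem_head? hhead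
    obtain ⟨u, hul, w, hwl, -, hwS, huw⟩ := (hlink v hvS).exists_rel_mem_notMem hrl hvl
    obtain ⟨l', hl', hhead', hset', hlen'⟩ := hl.exists_detour hul huw (hR huw)
    have hfin : {v | v ∈ l}.Finite := l.finite_toSet
    refine ih l' hl' (hhead' ▸ hhead) (hset' ▸ Set.insert_subset hwS hsub) ?_ ?_
    · rw [hset', Set.ncard_insert_of_notMem hwl hfin]
      omega
    · have hdiff : S \ insert w {v | v ∈ l} = (S \ {v | v ∈ l}) \ {w} := by
        ext; simp only [Set.mem_sdiff, Set.mem_insert_iff, Set.mem_singleton_iff]; tauto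
      rw [hset', hdiff, Set.ncard_sdiff_singleton_of_mem (show w ∈ S \ {v | v ∈ l} from ⟨hwS, hwl⟩)]
      omega

end CoveringWalks

section Traces

variable {α T : Type*} (step : α → T → α)

lemma exists_scanl_eq_of_isChain {R : α → α → Prop} (hstep : ∀ ⦃a b⦄, R a b → ∃ t, step a t = b) :
    ∀ {a : α} {l : List α}, (a :: l).IsChain R → ∃ ts : List T, ts.scanl step a = a :: l
  | _, [], _ => ⟨[], rfl⟩
  | a, b :: l, h => by
    rw [List.isChain_cons_cons] at h
    obtain ⟨t, rfl⟩ := hstep h.1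
    obtain ⟨ts, hts⟩ := exists_scanl_eq_of_isChain hstep h.2
    exact ⟨t :: ts, by rw [List.scanl_cons, hts]⟩

/-- The vertices visited when a word is read from the first of a list of roots: the letter
`some t` moves the current vertex by `t`, the letter `none` jumps to the next root. -/
def trace : List α → List (Option T) → List α
  | [], _ => []
  | a :: _, [] => [a]
  | a :: rs, some t :: ts => a :: trace (step a t :: rs) ts
  | a :: rs, none :: ts => a :: trace rs ts

@[simp]
lemma trace_nil (ts : List (Option T)) : trace step [] ts = [] := by
  cases ts <;> rfl

lemma trace_map_some_append (ts : List T) (a : α) (rs : List α) (rest : List (Option T)) :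
    trace step (a :: rs) (ts.map some ++ none :: rest) = ts.scanl step a ++ trace step rs rest := by
  induction ts generalizing a with
  | nil => rfl
  | cons t ts ih => simp [trace, ih]

variable {step}

theorem exists_trace_eq_biUnion {R : α → α → Prop} (hR : ∀ ⦃a b⦄, R a b → R b a)
    (hstep : ∀ ⦃a b⦄, R a b → ∃ t, step a t = b) {S : α → Set α} (rs : List α)
    (hS : ∀ r ∈ rs, (S r).Finite ∧ r ∈ S r ∧ LinkedFrom R (S r) r) :
    ∃ w : List (Option T), w.length ≤ 2 * (rs.map fun r => (S r).ncard).sum ∧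
      ∀ rest, {v | v ∈ trace step rs (w ++ rest)} = ⋃ r ∈ rs, S r := by
  induction rs with
  | nil => exact ⟨[], by simp, by simp⟩
  | cons r rs ih =>
    obtain ⟨hfin, hr, hlink⟩ := hS r List.mem_cons_self
    obtain ⟨w, hw, hwS⟩ := ih fun r' hr' => hS r' (List.mem_cons_of_mem r hr')
    obtain ⟨l, hl, hhead, hlS, hlen⟩ := exists_isChain_cover hR hfin hr hlink
    obtain ⟨l, rfl⟩ := List.head?_eq_some_iff.mp hhead
    obtain ⟨ts, hts⟩ := exists_scanl_eq_of_isChain step hstep hl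
    have hts_len : ts.length = l.length := by simpa using congrArg List.length hts
    refine ⟨ts.map some ++ none :: w, ?_, fun rest => ?_⟩
    · simp only [List.length_append, List.length_map, List.length_cons, List.map_cons,
        List.sum_cons] at hlen hw ⊢
      omega
    · rw [List.append_assoc, List.cons_append, trace_map_some_append, hts]
      ext v
      have hwv := Set.ext_iff.mp (hwS rest) v
      have hlv := Set.ext_iff.mp hlS v
      simp only [Set.mem_ofPred_eq, List.mem_append, List.mem_cons] at hwv hlv ⊢
      rw [hlv, hwv]
      simp only [Set.mem_iUnion₂, exists_prop, or_and_right, exists_or,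
        exists_eq_left]

theorem exists_vector_trace_eq_biUnion {R : α → α → Prop} (hR : ∀ ⦃a b⦄, R a b → R b a)
    (hstep : ∀ ⦃a b⦄, R a b → ∃ t, step a t = b) {S : α → Set α} (rs : List α)
    (hS : ∀ r ∈ rs, (S r).Finite ∧ r ∈ S r ∧ LinkedFrom R (S r) r)
    {L : ℕ} (hL : 2 * (rs.map fun r => (S r).ncard).sum ≤ L) :
    ∃ w : List.Vector (Option T) L, {v | v ∈ trace step rs w.toList} = ⋃ r ∈ rs, S r := by
  obtain ⟨w, hw, hwS⟩ := exists_trace_eq_biUnion hR hstep rs hS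
  exact ⟨⟨w ++ List.replicate (L - w.length) none, by
    rw [List.length_append, List.length_replicate]; omega⟩, hwS _⟩

end Traces

lemma Nat.card_subtype_le_mul_of_forall_exists {β ι D : Type*} [Finite ι] [Finite D]
    {p : β → Prop} (f : ι → D → β) (h : ∀ x, p x → ∃ i y, f i y = x) :
    Nat.card {x // p x} ≤ Nat.card ι * Nat.card D := by
  choose i y hy using fun x : {x // p x} => h x.1 x.2
  rw [← Nat.card_prod]
  refine Nat.card_le_card_of_injective (fun x => (i x, y x)) fun x x' hxx' => Subtype.ext ?_
  obtain ⟨hi, hy'⟩ := Prod.ext_iff.mp hxx'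
  rw [← hy x, ← hy x', show i x = i x' from hi, show y x = y x' from hy']

lemma Nat.choose_le_choose_of_le_of_two_mul_le {n a b : ℕ} (hab : a ≤ b) (hbn : 2 * b ≤ n) :
    n.choose a ≤ n.choose b := by
  induction b, hab using Nat.le_induction with
  | base => rfl
  | succ b _ ih => exact (ih (by omega)).trans (Nat.choose_le_succ_of_lt_half_left (by omega))

lemma Finset.card_filter_powerset_card_le {α : Type*} (s : Finset α) {m b : ℕ} (hmb : m ≤ b)
    (hbs : 2 * b ≤ s.card) :
    (s.powerset.filter fun t => t.card ≤ m).card ≤ (m + 1) * s.card.choose b := by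
  classical
  have hsub : s.powerset.filter (fun t => t.card ≤ m) ⊆
      (Finset.range (m + 1)).biUnion fun c => s.powersetCard c := by
    intro t ht
    rw [Finset.mem_filter, Finset.mem_powerset] at ht
    exact Finset.mem_biUnion.mpr
      ⟨t.card, Finset.mem_range.mpr (by omega), Finset.mem_powersetCard.mpr ⟨ht.1, rfl⟩⟩
  calc _ ≤ ∑ c ∈ Finset.range (m + 1), (s.powersetCard c).card :=
        (Finset.card_le_card hsub).trans Finset.card_biUnion_le
    _ ≤ ∑ _c ∈ Finset.range (m + 1), s.card.choose b := by
        refine Finset.sum_le_sum fun c hc => ?_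
        rw [Finset.card_powersetCard]
        have := Finset.mem_range.mp hc
        exact Nat.choose_le_choose_of_le_of_two_mul_le (by omega) hbs
    _ = (m + 1) * s.card.choose b := by simp

lemma succ_mul_pow_le_pow {d m x : ℕ} (hd : 2 ≤ d) (hmx : m ≤ x) :
    (m + 1) * ((d + 1) ^ 2 + 1) ^ (2 * x) ≤ d ^ (9 * x) := by
  have hbase : (d + 1) ^ 2 + 1 ≤ d ^ 4 := by
    have hd2 : 4 ≤ d ^ 2 := by nlinarith
    nlinarith
  have hroots : m + 1 ≤ d ^ x :=
    (Nat.succ_le_succ hmx).trans (Nat.lt_two_pow_self.trans_le (Nat.pow_le_pow_left hd x))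
  calc (m + 1) * ((d + 1) ^ 2 + 1) ^ (2 * x) ≤ d ^ x * (d ^ 4) ^ (2 * x) :=
        Nat.mul_le_mul hroots (Nat.pow_le_pow_left hbase _)
    _ = d ^ (9 * x) := by ring

section Hypercube

variable {d : ℕ}

def flipCoord (a : V d) (i : Fin d) : V d := Function.update a i (!a i)

lemma hammingDist_flipCoord_self (a : V d) (i : Fin d) : hammingDist a (flipCoord a i) = 1 := by
  rw [hammingDist, Finset.card_eq_one]
  refine ⟨i, Finset.ext fun j => ?_⟩
  by_cases hj : j = i <;> simp [flipCoord, Function.update_apply, hj]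

lemma hammingDist_flipCoord_add_one {a b : V d} {i : Fin d} (h : a i ≠ b i) :
    hammingDist (flipCoord a i) b + 1 = hammingDist a b := by
  have hfilter : ({j | flipCoord a i j ≠ b j} : Finset (Fin d)) =
      ({j | a j ≠ b j} : Finset (Fin d)).erase i := by
    ext j
    by_cases hj : j = i
    · subst hj; cases ha : a j <;> cases hb : b j <;> simp_all [flipCoord]
    · simp [flipCoord, Function.update_apply, hj]
  rw [hammingDist, hfilter, Finset.card_erase_add_one (by simpa using h), hammingDist]

lemma exists_flipCoord_hammingDist_add_one {a b : V d} (h : a ≠ b) :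
    ∃ i, hammingDist (flipCoord a i) b + 1 = hammingDist a b :=
  (Function.ne_iff.mp h).imp fun _ => hammingDist_flipCoord_add_one

lemma cube_reachable (a b : V d) : (cube d).Reachable a b := by
  induction hn : hammingDist a b generalizing a with
  | zero => rw [hammingDist_eq_zero.mp hn]
  | succ n ih =>
    obtain ⟨i, hi⟩ := exists_flipCoord_hammingDist_add_one (a := a) (b := b)
      (hammingDist_ne_zero.mp (by omega))
    exact (SimpleGraph.Adj.reachable (hammingDist_flipCoord_self a i)).trans (ih _ (by omega))

lemma hammingDist_le_length {a b : V d} (p : (cube d).Walk a b) : hammingDist a b ≤ p.length := by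
  induction p with
  | nil => simp
  | @cons u v w h p ih =>
    have h1 : hammingDist u v = 1 := h
    rw [SimpleGraph.Walk.length_cons]
    exact (hammingDist_triangle u v w).trans (by omega)

lemma hammingDist_le_dist (a b : V d) : hammingDist a b ≤ (cube d).dist a b := by
  obtain ⟨p, hp⟩ := (cube_reachable a b).exists_walk_length_eq_dist
  exact hp ▸ hammingDist_le_length p

def flipAt (a : V d) : Option (Fin d) → V d
  | none => a
  | some i => flipCoord a i

abbrev Move (d : ℕ) : Type := Option (Fin d) × Option (Fin d)

def move (a : V d) (t : Move d) : V d := flipAt (flipAt a t.1) t.2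

lemma exists_flipAt_eq {a b : V d} (h : hammingDist a b ≤ 1) : ∃ o, flipAt a o = b := by
  by_cases hab : a = b
  · exact ⟨none, hab⟩
  obtain ⟨i, hi⟩ := exists_flipCoord_hammingDist_add_one hab
  exact ⟨some i, show flipCoord a i = b from hammingDist_eq_zero.mp (by omega)⟩

lemma exists_move_eq {a b : V d} (h : hammingDist a b ≤ 2) : ∃ t, move a t = b := by
  by_cases hab : a = b
  · exact ⟨(none, none), hab⟩
  obtain ⟨i, hi⟩ := exists_flipCoord_hammingDist_add_one hab
  obtain ⟨o, ho⟩ := exists_flipAt_eq (a := flipCoord a i) (b := b) (by omega)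
  exact ⟨(some i, o), ho⟩

lemma card_move (d : ℕ) : Fintype.card (Move d) = (d + 1) ^ 2 := by
  simp [sq]

end Hypercube

section TwoComponents

variable {d : ℕ}

def twoStep (d : ℕ) (A : Set (V d)) (a b : V d) : Prop :=
  a ∈ A ∧ b ∈ A ∧ (cube d).dist a b ≤ 2

instance (A : Set (V d)) : Std.Symm (twoStep d A) :=
  ⟨fun _ _ h => ⟨h.2.1, h.1, (cube d).dist_comm ▸ h.2.2⟩⟩

lemma twoStep_mono {A B : Set (V d)} (hAB : A ⊆ B) : twoStep d A ≤ twoStep d B :=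
  fun _ _ h => ⟨hAB h.1, hAB h.2.1, h.2.2⟩

def twoCompOf (d : ℕ) (X : Set (V d)) (v : V d) : Set (V d) :=
  {u | u ∈ X ∧ Relation.ReflTransGen (twoStep d X) v u}

variable {X C : Set (V d)} {v : V d}

lemma twoCompOf_subset : twoCompOf d X v ⊆ X := fun _ hu => hu.1

lemma mem_twoCompOf_self (hv : v ∈ X) : v ∈ twoCompOf d X v := ⟨hv, .refl⟩

lemma reflTransGen_twoStep_twoCompOf {u : V d} (h : Relation.ReflTransGen (twoStep d X) v u) :
    Relation.ReflTransGen (twoStep d (twoCompOf d X v)) v u := by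
  induction h with
  | refl => exact .refl
  | @tail b c hvb hbc ih => exact ih.tail ⟨⟨hbc.1, hvb⟩, ⟨hbc.2.1, hvb.tail hbc⟩, hbc.2.2⟩

lemma is2Comp_twoCompOf (hv : v ∈ X) : Is2Comp d X (twoCompOf d X v) := by
  have hlinked : TwoLinked d (twoCompOf d X v) := by
    intro x hx y hy
    exact (Std.Symm.symm _ _ (reflTransGen_twoStep_twoCompOf hx.2)).trans
      (reflTransGen_twoStep_twoCompOf hy.2)
  refine ⟨twoCompOf_subset, ⟨v, mem_twoCompOf_self hv⟩, hlinked, fun C' hsub hC'X hC' => ?_⟩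
  refine Set.Subset.antisymm (fun u hu => ?_) hsub
  exact ⟨hC'X hu, Relation.ReflTransGen.mono (twoStep_mono hC'X) _ _
    (hC' v (hsub (mem_twoCompOf_self hv)) u hu)⟩

lemma Is2Comp.eq_twoCompOf (hC : Is2Comp d X C) (hv : v ∈ C) : C = twoCompOf d X v := by
  obtain ⟨hCX, -, hlinked, hmax⟩ := hC
  have hsub : C ⊆ twoCompOf d X v := fun u hu =>
    ⟨hCX hu, Relation.ReflTransGen.mono (twoStep_mono hCX) _ _ (hlinked v hv u hu)⟩
  exact (hmax _ hsub twoCompOf_subset (is2Comp_twoCompOf (hCX hv)).2.2.1).symm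

theorem exists_roots {Y : Set (V d)} (hmeet : ∀ C, Is2Comp d X C → (C ∩ Y).Nonempty) :
    ∃ R : Finset (V d), ↑R ⊆ X ∩ Y ∧ R.card ≤ {C | Is2Comp d X C}.ncard ∧
      (↑R : Set (V d)).PairwiseDisjoint (twoCompOf d X) ∧ ⋃ r ∈ R, twoCompOf d X r = X := by
  classical
  choose! root hroot using hmeet
  have hroot_eq {C : Set (V d)} (hC : Is2Comp d X C) : twoCompOf d X (root C) = C :=
    (hC.eq_twoCompOf (hroot C hC).1).symm
  refine ⟨(Finset.univ.filter fun C => Is2Comp d X C).image root, ?_, ?_, ?_, ?_⟩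
  · intro r hr
    obtain ⟨C, hC, rfl⟩ := Finset.mem_image.mp hr
    have hC := (Finset.mem_filter.mp hC).2
    exact ⟨hC.1 (hroot C hC).1, (hroot C hC).2⟩
  · refine Finset.card_image_le.trans (le_of_eq ?_)
    rw [← Set.ncard_coe_finset]
    congr 1
    ext; simp
  · intro r₁ hr₁ r₂ hr₂ hne
    obtain ⟨C₁, hC₁, rfl⟩ := Finset.mem_image.mp hr₁
    obtain ⟨C₂, hC₂, rfl⟩ := Finset.mem_image.mp hr₂
    have hC₁ := (Finset.mem_filter.mp hC₁).2
    have hC₂ := (Finset.mem_filter.mp hC₂).2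
    rw [Function.onFun, hroot_eq hC₁, hroot_eq hC₂]
    refine Set.disjoint_left.mpr fun u hu₁ hu₂ => hne ?_
    rw [hC₁.eq_twoCompOf hu₁, hC₂.eq_twoCompOf hu₂]
  · refine Set.Subset.antisymm (Set.iUnion₂_subset fun _ _ => twoCompOf_subset) fun u hu => ?_
    have hC := is2Comp_twoCompOf hu
    refine Set.mem_biUnion (Finset.mem_coe.mpr (Finset.mem_image_of_mem root
      (Finset.mem_filter.mpr ⟨Finset.mem_univ _, hC⟩))) ?_
    rw [hroot_eq hC]
    exact mem_twoCompOf_self hu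

end TwoComponents

section Encoding

variable {d : ℕ}

theorem exists_roots_trace_eq {X Y : Set (V d)}
    (hmeet : ∀ C, Is2Comp d X C → (C ∩ Y).Nonempty) :
    ∃ R : Finset (V d), ↑R ⊆ Y ∧ R.card ≤ {C | Is2Comp d X C}.ncard ∧ R.card ≤ X.ncard ∧
      ∃ w : List.Vector (Option (Move d)) (2 * X.ncard),
        {v | v ∈ trace move R.toList w.toList} = X := by
  obtain ⟨R, hRXY, hRcomps, hdisj, hcover⟩ := exists_roots hmeet
  have hsum : ∑ r ∈ R, (twoCompOf d X r).ncard = X.ncard := by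
    conv_rhs => rw [← hcover, ← Finset.set_biUnion_coe]
    rw [Set.Finite.ncard_biUnion R.finite_toSet (fun _ _ => Set.toFinite _) hdisj,
      finsum_mem_coe_finset]
  have hS : ∀ r ∈ R.toList, (twoCompOf d X r).Finite ∧ r ∈ twoCompOf d X r ∧
      LinkedFrom (fun a b => hammingDist a b ≤ 2) (twoCompOf d X r) r := by
    intro r hr
    have hrX := (hRXY (Finset.mem_toList.mp hr)).1
    refine ⟨Set.toFinite _, mem_twoCompOf_self hrX, fun v hv => ?_⟩
    refine Relation.ReflTransGen.mono (fun a b h => ⟨h.1, h.2.1, ?_⟩) _ _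
      ((is2Comp_twoCompOf hrX).2.2.1 r (mem_twoCompOf_self hrX) v hv)
    exact (hammingDist_le_dist a b).trans h.2.2
  obtain ⟨w, hw⟩ := exists_vector_trace_eq_biUnion (step := move)
    (fun a b h => (hammingDist_comm b a).trans_le h) (fun _ _ => exists_move_eq) R.toList hS
    (L := 2 * X.ncard) (by rw [Finset.sum_map_toList, hsum])
  refine ⟨R, fun r hr => (hRXY hr).2, hRcomps, ?_, w, ?_⟩
  · calc R.card = ∑ r ∈ R, 1 := by simp
      _ ≤ ∑ r ∈ R, (twoCompOf d X r).ncard := Finset.sum_le_sum fun r hr =>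
          (Set.ncard_pos).mpr ⟨r, mem_twoCompOf_self (hRXY hr).1⟩
      _ = X.ncard := hsum
  · simpa [hcover] using hw

end Encoding

lemma eq_of_isEven_iff_of_le_one {d : ℕ} (hd : d ≤ 1) {u v : V d} (h : isEven u ↔ isEven v) :
    u = v := by
  interval_cases d
  · exact Subsingleton.elim u v
  · revert u v
    unfold isEven
    decide

lemma two_le_of_subset_parityClass {d : ℕ} {P Y : Set (V d)}
    (hP : P = {v | isEven v} ∨ P = {v | ¬ isEven v}) (hYP : Y ⊆ P) (hY : 2 ≤ Y.ncard) : 2 ≤ d := by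
  by_contra! hd
  have hsub : Y.Subsingleton := by
    intro u hu v hv
    refine eq_of_isEven_iff_of_le_one (by omega) ?_
    rcases hP with rfl | rfl
    · exact iff_of_true (hYP hu) (hYP hv)
    · exact iff_of_false (hYP hu) (hYP hv)
  have := Set.ncard_le_one_iff_subsingleton.mpr hsub
  omega

/-- Counting `x`-element subsets `X` of one side of the bipartition with at most `b`
2-components, each 2-component meeting `Y`:  there are at most `C(|Y|, b) · d^{Kx}` of them,
for an absolute constant `K`. -/
theorem count_linked_sets_rooted_in :
    ∃ K : ℕ, ∀ d : ℕ, ∀ P : Set (V d), (P = {v | isEven v} ∨ P = {v | ¬ isEven v}) →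
      ∀ Y : Set (V d), Y ⊆ P → ∀ x b : ℕ, 0 < x → 0 < b → 2 * b ≤ Y.ncard →
        (Nat.card {X : Set (V d) // X ⊆ P ∧ X.ncard = x ∧
            {C : Set (V d) | Is2Comp d X C}.ncard ≤ b ∧
            ∀ C : Set (V d), Is2Comp d X C → (C ∩ Y).Nonempty} : ℝ) ≤
          (Y.ncard.choose b : ℝ) * (d : ℝ) ^ (K * x) := by
  classical
  refine ⟨9, fun d P hP Y hYP x b _ hb h2b => ?_⟩
  have hd := two_le_of_subset_parityClass hP hYP (by omega)
  let roots := Y.toFinset.powerset.filter fun R => R.card ≤ min b x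
  have hcode : ∀ X : Set (V d), (X ⊆ P ∧ X.ncard = x ∧ {C | Is2Comp d X C}.ncard ≤ b ∧
      ∀ C, Is2Comp d X C → (C ∩ Y).Nonempty) →
      ∃ (R : roots) (w : List.Vector (Option (Move d)) (2 * x)),
        {v | v ∈ trace move R.1.toList w.toList} = X := by
    rintro X ⟨-, rfl, hcomps, hmeet⟩
    obtain ⟨R, hRY, hRcomps, hRX, w, hw⟩ := exists_roots_trace_eq hmeet
    refine ⟨⟨R, Finset.mem_filter.mpr ⟨?_, le_min (hRcomps.trans hcomps) hRX⟩⟩, w, hw⟩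
    exact Finset.mem_powerset.mpr fun r hr => Set.mem_toFinset.mpr (hRY hr)
  have hcount := Nat.card_subtype_le_mul_of_forall_exists _ hcode
  rw [Nat.card_eq_finsetCard, Nat.card_eq_fintype_card (α := List.Vector _ _), card_vector,
    Fintype.card_option, card_move] at hcount
  have hroots : roots.card ≤ (min b x + 1) * Y.ncard.choose b := by
    rw [Set.ncard_eq_toFinset_card'] at h2b ⊢
    exact Y.toFinset.card_filter_powerset_card_le (min_le_left b x) h2b
  exact_mod_cast calc _ ≤ roots.card * ((d + 1) ^ 2 + 1) ^ (2 * x) := hcount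
    _ ≤ (min b x + 1) * Y.ncard.choose b * ((d + 1) ^ 2 + 1) ^ (2 * x) := by gcongr
    _ ≤ Y.ncard.choose b * d ^ (9 * x) := by
      rw [mul_comm (min b x + 1), mul_assoc]
      exact Nat.mul_le_mul_left _ (succ_mul_pow_le_pow hd (min_le_right b x))
end

section
/- Let X = (X_1, ..., X_k) be a random vector whose coordinates take finitely many values, and let α : 2^{[k]} → [0,∞) satisfy ∑_{A : A ∋ i} α_A = 1 for every i ∈ [k]. Then H(X) ≤ ∑_{A ⊆ [k]} α_A · H(X_A), where X_A = (X_i : i ∈ A). -/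
/-!
Entropy is submodular: `H(X_{A∪B}) + H(X_{A∩B}) ≤ H(X_A) + H(X_B)`. Writing `Y = X_A`,
`Z = X_B`, `W = X_{A∩B}`, this is Gibbs' inequality `log x ≤ x - 1` applied to the ratio
`P(Y) P(Z) / (P(Y, Z) P(W))`, whose `P(Y, Z)`-mean is at most `1` because `W` is a function
of `Y` and of `Z`.

For any submodular `h` with `h ∅ = 0`, order the coordinates and telescope:
`h A = ∑_{i ∈ A} (h (A ∩ [≤ i]) - h (A ∩ [< i])) ≥ ∑_{i ∈ A} (h [≤ i] - h [< i])`, the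
inequality being submodularity for `A ∩ [≤ i]` and `[< i]`. Weighting by `α` and using
`∑_{A ∋ i} α A = 1` collapses the right-hand side to `h univ`.
-/

open scoped Classical in
/-- The probability that the random variable `X` (on the finite probability space `(Ω, p)`)
takes the value `t`. -/
noncomputable def pr {Ω T : Type*} [Fintype Ω] (p : Ω → ℝ) (X : Ω → T) (t : T) : ℝ :=
  ∑ ω : Ω, if X ω = t then p ω else 0

/-- The binary (Shannon) entropy of the random variable `X` on the finite probability
space `(Ω, p)`: `H(X) = ∑_t P(X = t) log₂ (1 / P(X = t))`. -/
noncomputable def ent {Ω T : Type*} [Fintype Ω] [Fintype T] (p : Ω → ℝ) (X : Ω → T) : ℝ :=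
  ∑ t : T, pr p X t * Real.logb 2 (pr p X t)⁻¹


open Finset Real

section SetFunction

variable {ι : Type*}

def IsSubmodular [DecidableEq ι] (h : Finset ι → ℝ) : Prop :=
  ∀ A B, h (A ∪ B) + h (A ∩ B) ≤ h A + h B

variable [LinearOrder ι]

def increment (h : Finset ι → ℝ) (A : Finset ι) (i : ι) : ℝ :=
  h (A.filter (· ≤ i)) - h (A.filter (· < i))

theorem sum_increment (h : Finset ι → ℝ) (A : Finset ι) :
    ∑ i ∈ A, increment h A i = h A - h ∅ := by
  induction A using Finset.induction_on_max with
  | empty => simp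
  | insert a s has ih =>
    have ha : a ∉ s := fun h => lt_irrefl a (has a h)
    have top : increment h (insert a s) a = h (insert a s) - h s := by
      rw [increment, filter_true_of_mem fun x hx => ?_, filter_insert, if_neg (lt_irrefl a),
        filter_true_of_mem has]
      rcases mem_insert.1 hx with rfl | hx
      exacts [le_rfl, (has x hx).le]
    have below : ∀ i ∈ s, increment h (insert a s) i = increment h s i := fun i hi => by
      simp only [increment, filter_insert, if_neg (has i hi).not_ge, if_neg (has i hi).not_gt]
    rw [sum_insert ha, top, sum_congr rfl below, ih]
    ring

theorem IsSubmodular.increment_univ_le [Fintype ι] {h : Finset ι → ℝ} (hh : IsSubmodular h)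
    {A : Finset ι} {i : ι} (hi : i ∈ A) : increment h univ i ≤ increment h A i := by
  have hunion : A.filter (· ≤ i) ∪ univ.filter (· < i) = univ.filter (· ≤ i) := by
    ext j; simp only [mem_union, mem_filter, mem_univ, true_and]
    constructor
    · rintro (h | h) <;> [exact h.2; exact h.le]
    · intro hj; rcases hj.lt_or_eq with hj | rfl
      exacts [Or.inr hj, Or.inl ⟨hi, le_rfl⟩]
  have hinter : A.filter (· ≤ i) ∩ univ.filter (· < i) = A.filter (· < i) := by
    ext j; simp only [mem_inter, mem_filter, mem_univ, true_and]
    exact ⟨fun h => ⟨h.1.1, h.2⟩, fun h => ⟨⟨h.1, h.2.le⟩, h.2⟩⟩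
  have := hh (A.filter (· ≤ i)) (univ.filter (· < i))
  rw [hunion, hinter] at this
  simp only [increment]
  linarith

theorem IsSubmodular.le_sum_mul [Fintype ι] {h : Finset ι → ℝ} (hh : IsSubmodular h)
    (h_empty : h ∅ = 0) (α : Finset ι → ℝ) (hα0 : ∀ A, 0 ≤ α A)
    (hα1 : ∀ i, ∑ A ∈ univ.filter (fun A : Finset ι => i ∈ A), α A = 1) :
    h univ ≤ ∑ A, α A * h A :=
  calc h univ = ∑ i, increment h univ i := by rw [sum_increment, h_empty, sub_zero]
    _ = ∑ i, ∑ A ∈ univ.filter (fun A : Finset ι => i ∈ A), α A * increment h univ i := by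
      simp only [← sum_mul, hα1, one_mul]
    _ = ∑ A, ∑ i ∈ A, α A * increment h univ i :=
      sum_comm' fun i A => by simp
    _ ≤ ∑ A, ∑ i ∈ A, α A * increment h A i :=
      sum_le_sum fun A _ => sum_le_sum fun i hi =>
        mul_le_mul_of_nonneg_left (hh.increment_univ_le hi) (hα0 A)
    _ = ∑ A, α A * h A := by simp only [← mul_sum, sum_increment, h_empty, sub_zero]

end SetFunction

section Entropy

variable {Ω : Type*} [Fintype Ω]

theorem sum_pr_mul {T : Type*} [Fintype T] (p : Ω → ℝ) (X : Ω → T) (φ : T → ℝ) :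
    ∑ t, pr p X t * φ t = ∑ ω, p ω * φ (X ω) := by
  classical
  simp only [pr, sum_mul, ite_mul, zero_mul]
  rw [sum_comm]
  exact sum_congr rfl fun ω _ => by simp

theorem ent_eq_neg_sum {T : Type*} [Fintype T] (p : Ω → ℝ) (X : Ω → T) :
    ent p X = -∑ ω, p ω * logb 2 (pr p X (X ω)) := by
  simp only [ent, logb_inv, mul_neg, sum_neg_distrib,
    sum_pr_mul p X (fun t => logb 2 (pr p X t))]

theorem pr_comp_eq {T U : Type*} (p : Ω → ℝ) (X : Ω → T) {f : T → U}
    (hf : Function.Injective f) (t : T) : pr p (fun ω => f (X ω)) (f t) = pr p X t := by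
  classical
  exact sum_congr rfl fun ω _ => if_congr hf.eq_iff rfl rfl

theorem ent_comp_of_injective {T U : Type*} [Fintype T] [Fintype U] (p : Ω → ℝ) (X : Ω → T)
    {f : T → U} (hf : Function.Injective f) : ent p (fun ω => f (X ω)) = ent p X := by
  simp only [ent_eq_neg_sum, pr_comp_eq p X hf]

theorem ent_of_subsingleton {p : Ω → ℝ} {T : Type*} [Fintype T] [Subsingleton T]
    (hp1 : ∑ ω, p ω = 1) (X : Ω → T) : ent p X = 0 := by
  have hpr : ∀ ω, pr p X (X ω) = 1 := fun ω => by
    simp only [pr, Subsingleton.elim (X _) (X ω), if_true, hp1]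
  simp [ent_eq_neg_sum, hpr]

theorem pr_nonneg {p : Ω → ℝ} (hp0 : ∀ ω, 0 ≤ p ω) {T : Type*} (X : Ω → T) (t : T) :
    0 ≤ pr p X t :=
  sum_nonneg fun ω _ => by split_ifs <;> simp [hp0 ω]

theorem le_pr_self {p : Ω → ℝ} (hp0 : ∀ ω, 0 ≤ p ω) {T : Type*} (X : Ω → T) (ω : Ω) :
    p ω ≤ pr p X (X ω) := by
  classical
  simpa [pr] using single_le_sum (f := fun ω' => if X ω' = X ω then p ω' else 0)
    (fun ω' _ => by split_ifs <;> simp [hp0 ω']) (mem_univ ω)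

theorem exists_eq_of_pr_ne_zero {p : Ω → ℝ} {T : Type*} {X : Ω → T} {t : T}
    (h : pr p X t ≠ 0) : ∃ ω, X ω = t := by
  by_contra! hX
  exact h (sum_eq_zero fun ω _ => if_neg (hX ω))

theorem sum_pr_fiber {T U : Type*} [Fintype T] [DecidableEq U] (p : Ω → ℝ) (X : Ω → T)
    (f : T → U) (u : U) :
    ∑ t, (if f t = u then pr p X t else 0) = pr p (fun ω => f (X ω)) u := by
  have := sum_pr_mul p X (fun t => if f t = u then 1 else 0)
  simp only [mul_ite, mul_one, mul_zero] at this
  rw [this, pr]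
  congr!

theorem ent_pair_add_ent_le {p : Ω → ℝ} (hp0 : ∀ ω, 0 ≤ p ω) {α β γ : Type*} [Fintype α]
    [Fintype β] [Fintype γ] (Y : Ω → α) (Z : Ω → β) (f : α → γ) (g : β → γ)
    (hfg : ∀ ω, f (Y ω) = g (Z ω)) :
    ent p (fun ω => (Y ω, Z ω)) + ent p (fun ω => g (Z ω)) ≤ ent p Y + ent p Z := by
  classical
  set J : Ω → α × β := fun ω => (Y ω, Z ω)
  set W : Ω → γ := fun ω => g (Z ω)
  set ρ : α × β → ℝ := fun t => pr p Y t.1 * pr p Z t.2 / (pr p J t * pr p W (f t.1))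
  have mass : ∑ ω, p ω * ρ (J ω) ≤ ∑ ω, p ω := by
    have hJ : ∀ t, pr p J t * ρ t ≤
        if g t.2 = f t.1 then pr p Z t.2 * (pr p Y t.1 / pr p W (f t.1)) else 0 := by
      rintro ⟨y, z⟩
      by_cases h0 : pr p J (y, z) = 0
      · simp only [h0, zero_mul]
        split_ifs
        exacts [mul_nonneg (pr_nonneg hp0 _ _) (div_nonneg (pr_nonneg hp0 _ _)
          (pr_nonneg hp0 _ _)), le_rfl]
      · obtain ⟨ω, hω⟩ := exists_eq_of_pr_ne_zero h0
        simp only [J, Prod.mk.injEq] at hω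
        rw [if_pos (hω.1 ▸ hω.2 ▸ (hfg ω).symm), mul_div_assoc', mul_div_mul_left _ _ h0]
        exact le_of_eq (by ring)
    have hW : ∀ y, pr p Y y / pr p W (f y) * pr p W (f y) ≤ pr p Y y := fun y => by
      rcases eq_or_ne (pr p W (f y)) 0 with h | h
      · simp [h, pr_nonneg hp0]
      · rw [div_mul_cancel₀ _ h]
    calc ∑ ω, p ω * ρ (J ω) = ∑ t, pr p J t * ρ t := (sum_pr_mul p J ρ).symm
      _ ≤ ∑ t : α × β, if g t.2 = f t.1 then pr p Z t.2 * (pr p Y t.1 / pr p W (f t.1))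
            else 0 := sum_le_sum fun t _ => hJ t
      _ = ∑ y, pr p Y y / pr p W (f y) * pr p W (f y) := by
        simp only [Fintype.sum_prod_type, ← ite_zero_mul, ← sum_mul, sum_pr_fiber, W, mul_comm]
      _ ≤ ∑ y, pr p Y y := sum_le_sum fun y _ => hW y
      _ = ∑ ω, p ω := by simpa using sum_pr_mul p Y (fun _ => 1)
  have pointwise : ∀ ω, p ω * (logb 2 (pr p Y (Y ω)) + logb 2 (pr p Z (Z ω))
      - logb 2 (pr p J (J ω)) - logb 2 (pr p W (W ω))) ≤ (p ω * ρ (J ω) - p ω) / log 2 := by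
    intro ω
    rcases (hp0 ω).eq_or_lt with h | hpos
    · simp [← h]
    have hY := hpos.trans_le (le_pr_self hp0 Y ω)
    have hZ := hpos.trans_le (le_pr_self hp0 Z ω)
    have hJ := hpos.trans_le (le_pr_self hp0 J ω)
    have hW := hpos.trans_le (le_pr_self hp0 W ω)
    have hρ : ρ (J ω) = pr p Y (Y ω) * pr p Z (Z ω) / (pr p J (J ω) * pr p W (W ω)) := by
      simp only [ρ, J, W, hfg]
    have hlog : logb 2 (pr p Y (Y ω)) + logb 2 (pr p Z (Z ω)) - logb 2 (pr p J (J ω))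
        - logb 2 (pr p W (W ω)) = log (ρ (J ω)) / log 2 := by
      rw [hρ, log_div (by positivity) (by positivity), log_mul hY.ne' hZ.ne',
        log_mul hJ.ne' hW.ne']
      simp only [logb]
      ring
    rw [hlog, ← mul_div_assoc, ← mul_sub_one]
    gcongr
    exact log_le_sub_one_of_pos (hρ ▸ by positivity)
  have key : ∑ ω, p ω * (logb 2 (pr p Y (Y ω)) + logb 2 (pr p Z (Z ω))
      - logb 2 (pr p J (J ω)) - logb 2 (pr p W (W ω))) ≤ 0 :=
    calc _ ≤ ∑ ω, (p ω * ρ (J ω) - p ω) / log 2 := sum_le_sum fun ω _ => pointwise ω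
      _ = (∑ ω, p ω * ρ (J ω) - ∑ ω, p ω) / log 2 := by rw [← sum_div, sum_sub_distrib]
      _ ≤ 0 := div_nonpos_of_nonpos_of_nonneg (by linarith) (log_nonneg one_le_two)
  simp only [mul_sub, mul_add, sum_sub_distrib, sum_add_distrib] at key
  rw [ent_eq_neg_sum p J, ent_eq_neg_sum p W, ent_eq_neg_sum p Y, ent_eq_neg_sum p Z]
  linarith

end Entropy

theorem Finset.restrict₂_union_injective {ι : Type*} [DecidableEq ι] {E : ι → Type*}
    (A B : Finset ι) :
    Function.Injective fun u : (∀ i : ↥(A ∪ B), E i) =>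
      (restrict₂ subset_union_left u, restrict₂ subset_union_right u) := by
  intro u v huv
  obtain ⟨hA, hB⟩ := Prod.ext_iff.1 huv
  funext ⟨i, hi⟩
  rcases mem_union.1 hi with hi | hi
  exacts [congrFun hA ⟨i, hi⟩, congrFun hB ⟨i, hi⟩]

theorem Finset.restrict_univ_injective {ι : Type*} [Fintype ι] {E : ι → Type*} :
    Function.Injective fun u : (∀ i, E i) => univ.restrict u :=
  fun _ _ h => funext fun i => congrFun h ⟨i, mem_univ i⟩

/-- Shearer's lemma: if `α : 2^[k] → [0,∞)` satisfies `∑_{A ∋ i} α_A = 1` for every `i`,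
then `H(X) ≤ ∑_A α_A H(X_A)`. -/
theorem shearer {Ω : Type*} [Fintype Ω] (k : ℕ) (S : Fin k → Type*) [∀ i, Fintype (S i)]
    (p : Ω → ℝ) (hp0 : ∀ ω, 0 ≤ p ω) (hp1 : ∑ ω : Ω, p ω = 1)
    (X : ∀ i : Fin k, Ω → S i)
    (α : Finset (Fin k) → ℝ) (hα0 : ∀ A, 0 ≤ α A)
    (hα1 : ∀ i : Fin k, ∑ A ∈ Finset.univ.filter (fun A : Finset (Fin k) => i ∈ A), α A = 1) :
    ent p (fun ω => (fun i : Fin k => X i ω)) ≤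
      ∑ A : Finset (Fin k), α A * ent p (fun ω => (fun i : A => X i.1 ω)) := by
  set Xf : Ω → ∀ i, S i := fun ω i => X i ω
  set h : Finset (Fin k) → ℝ := fun A => ent p fun ω => A.restrict (Xf ω)
  have h_sub : IsSubmodular h := fun A B => by
    have h_union : h (A ∪ B) = ent p fun ω => (A.restrict (Xf ω), B.restrict (Xf ω)) :=
      (ent_comp_of_injective p _ (restrict₂_union_injective A B)).symm
    rw [h_union]
    exact ent_pair_add_ent_le hp0 _ _ (restrict₂ inter_subset_left)
      (restrict₂ inter_subset_right) fun _ => rfl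
  have h_empty : h ∅ = 0 := ent_of_subsingleton hp1 _
  have h_univ : h univ = ent p Xf := ent_comp_of_injective p Xf restrict_univ_injective
  exact h_univ ▸ h_sub.le_sum_mul h_empty α hα0 hα1
end

section
/- Let f be a proper 4-coloring of Q_d and let Z be a 2-linked subset of O such that every vertex of Z is bad for the phase ({1,2},{3,4}) (i.e., f(z) ∈ {1,2} for all z ∈ Z) and every vertex of N(Z) is good (i.e., f(v) ∈ {1,2} for all v ∈ N(Z) ⊆ E). Then f is constant on Z and constant on N(Z); moreover, if f ≡ c on Z with c ∈ {1,2}, then f equals the other element of {1,2} on all of N(Z). The analogous statement holds for 2-linked Z ⊆ E with all of Z bad (f(Z) ⊆ {3,4}) and all of N(Z) ⊆ O good (f(N(Z)) ⊆ {3,4}). -/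
open Finset

/-- `f` is a proper `q`-coloring of the `d`-dimensional hypercube. -/
def IsColoring (d q : ℕ) (f : V d → Fin q) : Prop :=
  ∀ u v : V d, (cube d).Adj u v → f u ≠ f v

/-!
Adjacent vertices of `Q_d` have opposite parity, so `Z ⊆ O` (or `Z ⊆ E`) is an independent set.
Two distinct vertices of `Z` at distance at most `2` therefore have a common neighbour `w ∈ N(Z)`;
as only two colours are available on `Z ∪ N(Z)` and `f z ≠ f w ≠ f z'`, we get `f z = f z'`.
Following a 2-linked chain, `f` is constant on `Z`, and then every vertex of `N(Z)` gets the
other colour. Connectivity of `Q_d` matters here, since `SimpleGraph.dist` is `0` between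
vertices in different components.
-/

theorem Finset.eq_of_ne_of_ne_of_card_le_two {β : Type*} {s : Finset β} (hs : #s ≤ 2)
    {a b c : β} (ha : a ∈ s) (hb : b ∈ s) (hc : c ∈ s) (hab : a ≠ b) (hbc : b ≠ c) : a = c := by
  by_contra hac
  exact hs.not_gt (Finset.two_lt_card.2 ⟨a, ha, b, hb, c, hc, hab, hac, hbc⟩)

namespace SimpleGraph

variable {α β : Type*} {G : SimpleGraph α}

theorem Reachable.eq_or_adj_or_exists_adj_adj_of_dist_le_two {u v : α} (h : G.Reachable u v)
    (hd : G.dist u v ≤ 2) : u = v ∨ G.Adj u v ∨ ∃ w, G.Adj u w ∧ G.Adj w v := by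
  obtain ⟨p, hp⟩ := h.exists_walk_length_eq_dist
  rcases p with _ | ⟨huw, _ | ⟨hwv, _ | ⟨_, _⟩⟩⟩
  · exact .inl rfl
  · exact .inr (.inl huw)
  · exact .inr (.inr ⟨_, huw, hwv⟩)
  · simp only [Walk.length_cons] at hp
    omega

theorem Coloring.eq_of_dist_le_two (C : G.Coloring β) (hG : G.Preconnected) {s : Finset β}
    (hs : #s ≤ 2) {Z : Set α} (hZ : G.IsIndepSet Z) (hZs : ∀ z ∈ Z, C z ∈ s)
    (hNs : ∀ z ∈ Z, ∀ w, G.Adj z w → C w ∈ s) {x y : α} (hx : x ∈ Z) (hy : y ∈ Z)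
    (hxy : G.dist x y ≤ 2) : C x = C y := by
  rcases (hG x y).eq_or_adj_or_exists_adj_adj_of_dist_le_two hxy with rfl | hadj | ⟨w, hxw, hwy⟩
  · rfl
  · exact absurd hadj (hZ hx hy hadj.ne)
  · exact eq_of_ne_of_ne_of_card_le_two hs (hZs x hx) (hNs x hx w hxw) (hZs y hy) (C.valid hxw)
      (C.valid hwy)

end SimpleGraph

section Hypercube

variable {d : ℕ}

theorem cube_adj_iff {u v : V d} : (cube d).Adj u v ↔ hammingDist u v = 1 := Iff.rfl

theorem cube_adj_update (u : V d) (i : Fin d) {b : Bool} (hb : u i ≠ b) :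
    (cube d).Adj u (Function.update u i b) := by
  rw [cube_adj_iff, hammingDist, card_eq_one]
  refine ⟨i, ?_⟩
  ext j
  by_cases hj : j = i
  · subst hj; simpa using hb
  · simp [hj]

theorem cube_preconnected : (cube d).Preconnected := by
  intro u v
  induction hn : hammingDist u v using Nat.strong_induction_on generalizing u with
  | _ n ih =>
    by_cases huv : u = v
    · exact huv ▸ .refl _
    obtain ⟨i, hi⟩ := Function.ne_iff.1 huv
    have hlt : hammingDist (Function.update u i (v i)) v < hammingDist u v := by
      refine card_lt_card ((ssubset_iff_of_subset ?_).2 ⟨i, by simpa using hi, by simp⟩)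
      intro j
      by_cases hj : j = i <;> simp [hj]
    exact (cube_adj_update u i hi).reachable.trans (ih _ (hn ▸ hlt) _ rfl)

theorem card_true_add_card_true (u v : V d) :
    #{i | u i = true} + #{i | v i = true} =
      hammingDist u v + 2 * #{i | u i = true ∧ v i = true} := by
  simp only [hammingDist, card_filter, ← sum_add_distrib, mul_sum]
  refine sum_congr rfl fun i _ => ?_
  cases u i <;> cases v i <;> rfl

theorem isEven_iff_not_isEven_of_adj {u v : V d} (h : (cube d).Adj u v) :
    isEven u ↔ ¬ isEven v := by
  have hodd : ¬ Even (#{i | u i = true} + #{i | v i = true}) := by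
    rw [card_true_add_card_true, cube_adj_iff.1 h, Nat.not_even_iff_odd]
    exact ⟨_, add_comm _ _⟩
  rw [Nat.even_add] at hodd
  unfold isEven
  tauto

theorem isIndepSet_isEven : (cube d).IsIndepSet {v | isEven v} :=
  fun _ hu _ hv _ hadj => (isEven_iff_not_isEven_of_adj hadj).1 hu hv

theorem isIndepSet_not_isEven : (cube d).IsIndepSet {v | ¬ isEven v} :=
  fun _ hu _ hv _ hadj => hu ((isEven_iff_not_isEven_of_adj hadj).2 hv)

namespace IsColoring

variable {q : ℕ} {f : V d → Fin q} {s : Finset (Fin q)} {Z : Set (V d)}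

theorem eq_on_of_twoLinked (hf : IsColoring d q f) (hs : #s ≤ 2) (hZ : (cube d).IsIndepSet Z)
    (hZl : TwoLinked d Z) (hZs : ∀ z ∈ Z, f z ∈ s) (hNs : ∀ v ∈ nbhd d Z, f v ∈ s) :
    ∀ z ∈ Z, ∀ z' ∈ Z, f z = f z' := by
  let C : (cube d).Coloring (Fin q) := SimpleGraph.Coloring.mk f (hf _ _)
  intro x hx y hy
  induction hZl x hx y hy with
  | refl => rfl
  | tail _ hab ih =>
    exact (ih hab.1).trans <| C.eq_of_dist_le_two cube_preconnected hs hZ hZs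
      (fun z hz w hzw => hNs w ⟨z, hz, hzw.symm⟩) hab.1 hab.2.1 hab.2.2

theorem monochromatic_of_twoLinked (hf : IsColoring d q f) (hs : #s ≤ 2)
    (hZ : (cube d).IsIndepSet Z) (hZl : TwoLinked d Z) (hZs : ∀ z ∈ Z, f z ∈ s)
    (hNs : ∀ v ∈ nbhd d Z, f v ∈ s) :
    (∀ z ∈ Z, ∀ z' ∈ Z, f z = f z') ∧
      (∀ v ∈ nbhd d Z, ∀ v' ∈ nbhd d Z, f v = f v') ∧
      (∀ z ∈ Z, ∀ v ∈ nbhd d Z, f z ≠ f v) := by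
  have hZc := hf.eq_on_of_twoLinked hs hZ hZl hZs hNs
  have hZN : ∀ z ∈ Z, ∀ v ∈ nbhd d Z, f z ≠ f v := by
    rintro z hz v ⟨z', hz', hvz'⟩
    rw [hZc z hz z' hz']
    exact (hf v z' hvz').symm
  refine ⟨hZc, fun v hv v' hv' => ?_, hZN⟩
  have ⟨z, hz, _⟩ := hv
  exact eq_of_ne_of_ne_of_card_le_two hs (hNs v hv) (hZs z hz) (hNs v' hv')
    (hZN z hz v hv).symm (hZN z hz v' hv')

end IsColoring

end Hypercube

/-- If `Z` is a 2-linked subset of `O` all of whose vertices are bad for the phase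
`({1,2},{3,4})` (i.e. colored from `{1,2}`, here `{0,1} : Finset (Fin 4)`), and all
vertices of `N(Z)` are good (also colored from `{1,2}`), then `f` is constant on `Z`,
constant on `N(Z)`, and takes different values on `Z` and `N(Z)` (so `N(Z)` gets the
other element of `{1,2}`).  Analogously with `Z ⊆ E`, colors `{3,4}` (here `{2,3}`). -/
theorem monochromatic_2linked (d : ℕ) (f : V d → Fin 4) (hf : IsColoring d 4 f) :
    (∀ Z : Set (V d), Z ⊆ {v | ¬ isEven v} → TwoLinked d Z →
      (∀ z ∈ Z, f z ∈ ({0, 1} : Finset (Fin 4))) →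
      (∀ v ∈ nbhd d Z, f v ∈ ({0, 1} : Finset (Fin 4))) →
      (∀ z ∈ Z, ∀ z' ∈ Z, f z = f z') ∧
      (∀ v ∈ nbhd d Z, ∀ v' ∈ nbhd d Z, f v = f v') ∧
      (∀ z ∈ Z, ∀ v ∈ nbhd d Z, f z ≠ f v))
    ∧ (∀ Z : Set (V d), Z ⊆ {v | isEven v} → TwoLinked d Z →
      (∀ z ∈ Z, f z ∈ ({2, 3} : Finset (Fin 4))) →
      (∀ v ∈ nbhd d Z, f v ∈ ({2, 3} : Finset (Fin 4))) →
      (∀ z ∈ Z, ∀ z' ∈ Z, f z = f z') ∧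
      (∀ v ∈ nbhd d Z, ∀ v' ∈ nbhd d Z, f v = f v') ∧
      (∀ z ∈ Z, ∀ v ∈ nbhd d Z, f z ≠ f v)) :=
  ⟨fun Z hZ hZl hZs hNs => hf.monochromatic_of_twoLinked (by decide)
      (Set.Pairwise.mono hZ isIndepSet_not_isEven) hZl hZs hNs,
    fun Z hZ hZl hZs hNs => hf.monochromatic_of_twoLinked (by decide)
      (Set.Pairwise.mono hZ isIndepSet_isEven) hZl hZs hNs⟩
end
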